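/- Let X be a noetherian topological space with irreducible components X₁, …, Xₙ and let Y be a proper closed subset of X. Then the multiset of dimensions of irreducible components of Y, arranged in weakly decreasing order, is strictly smaller in lexicographic order than that of X (assuming all these dimensions are finite). -/

import Mathlib

/-!
Regard the components of `Y` as closed subsets of `X`. Those that are components of `X` appear on
both sides. Any other component `Z` of `Y` lies properly in a component `T` of `X` which is not a
component of `Y` (by maximality of `Z`), and a proper closed subset of a finite-dimensional
irreducible space has smaller dimension. The component of `X` through a point outside `Y` is not a
component of `Y`. So the dimensions of `Y` are smaller than those of `X` in the Dershowitz–Manna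
order on multisets, and for decreasingly sorted lists this forces lexicographic order.
-/

open TopologicalSpace

theorem List.lex_lt_of_isDershowitzMannaLT {α : Type*} [LinearOrder α] {l₁ l₂ : List α}
    (h₁ : l₁.Pairwise (· ≥ ·)) (h₂ : l₂.Pairwise (· ≥ ·))
    (h : Multiset.IsDershowitzMannaLT (l₁ : Multiset α) l₂) :
    List.Lex (· < ·) l₁ l₂ := by
  obtain ⟨X, Y, Z, hZ, hl₁, hl₂, hYZ⟩ := h
  induction l₁ generalizing l₂ X with
  | nil =>
    obtain _ | ⟨a, l₂⟩ := l₂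
    · exact absurd (add_eq_zero.mp hl₂.symm).2 hZ
    · exact .nil
  | cons b l₁ ih =>
    obtain _ | ⟨a, l₂⟩ := l₂
    · exact absurd (add_eq_zero.mp hl₂.symm).2 hZ
    -- `a` bounds `X + Z`, hence also `Y`; so `b ≤ a`, and `b = a` forces `b ∈ X`, where it
    -- cancels from both sides.
    have hle : ∀ x ∈ X + Z, x ≤ a := by
      rw [← hl₂]
      exact fun x hx => (List.mem_cons.mp hx).elim le_of_eq (List.rel_of_pairwise_cons h₂ ·)
    obtain hbX | hbY := Multiset.mem_add.mp (hl₁ ▸ Multiset.mem_cons_self b l₁ : b ∈ X + Y)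
    · obtain hba | rfl := (hle b (Multiset.mem_add.mpr (.inl hbX))).lt_or_eq
      · exact .rel hba
      rw [← Multiset.cons_erase hbX, Multiset.cons_add] at hl₁ hl₂
      rw [← Multiset.cons_coe, Multiset.cons_inj_right] at hl₁ hl₂
      exact .cons (ih (List.pairwise_cons.mp h₁).2 (List.pairwise_cons.mp h₂).2 _ hl₁ hl₂)
    · obtain ⟨z, hz, hbz⟩ := hYZ b hbY
      exact .rel (hbz.trans_le (hle z (Multiset.mem_add.mpr (.inr hz))))

theorem Finset.isDershowitzMannaLT_map_val {α β : Type*} [Preorder α] [DecidableEq β]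
    {S T : Finset β} (f : β → α) (hne : (T \ S).Nonempty)
    (h : ∀ s ∈ S \ T, ∃ t ∈ T \ S, f s < f t) :
    Multiset.IsDershowitzMannaLT (S.val.map f) (T.val.map f) := by
  refine ⟨(S ∩ T).val.map f, (S \ T).val.map f, (T \ S).val.map f,
    fun h0 => hne.ne_empty (val_eq_zero.mp (Multiset.map_eq_zero.mp h0)), ?_, ?_, ?_⟩
  · rw [← Multiset.map_add, inter_val, sdiff_val, add_comm, Multiset.sub_add_inter]
  · rw [← Multiset.map_add, inter_comm, inter_val, sdiff_val, add_comm, Multiset.sub_add_inter]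
  · intro _ hy
    obtain ⟨s, hs, rfl⟩ := Multiset.mem_map.mp hy
    obtain ⟨t, ht, hst⟩ := h s hs
    exact ⟨f t, Multiset.mem_map_of_mem f ht, hst⟩

theorem Order.krullDim_lt_height_of_strictMono {α β : Type*} [Preorder α] [Preorder β]
    {f : α → β} (hf : StrictMono f) {b : β} (hb : ∀ a, f a < b) (hfin : height b ≠ ⊤) :
    krullDim α < height b := by
  lift height b to ℕ using hfin with n hn
  refine krullDim_lt_coe_iff.mpr fun p => ?_
  have hlen : (p.length : ℕ∞) + 1 ≤ n := calc
    (p.length : ℕ∞) + 1 ≤ height p.last + 1 := by gcongr; exact length_le_height_last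
    _ ≤ height (f p.last) + 1 := by gcongr; exact height_le_height_apply_of_strictMono f hf _
    _ ≤ n := hn ▸ height_add_one_le (hb p.last)
  exact_mod_cast hlen

theorem Topology.IsClosedEmbedding.topologicalKrullDim_lt {X Y : Type*} [TopologicalSpace X]
    [TopologicalSpace Y] [IrreducibleSpace X] {f : Y → X} (hf : IsClosedEmbedding f)
    (hfs : ¬ Function.Surjective f) (hX : topologicalKrullDim X ≠ ⊤) :
    topologicalKrullDim Y < topologicalKrullDim X := by
  let univX : IrreducibleCloseds X :=
    ⟨Set.univ, IrreducibleSpace.isIrreducible_univ X, isClosed_univ⟩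
  have hmap : ∀ C, IrreducibleCloseds.map f hf.continuous C < univX := fun C => by
    refine lt_of_le_of_ne (fun _ _ => trivial) fun hC => hfs (Set.range_eq_univ.mp ?_)
    refine Set.eq_univ_of_univ_subset ?_
    exact (congrArg SetLike.coe hC).symm.subset.trans
      (closure_minimal (Set.image_subset_range f C) hf.isClosed_range)
  have hheight : (Order.height univX : WithBot ℕ∞) ≤ topologicalKrullDim X :=
    Order.height_le_krullDim _
  calc topologicalKrullDim Y < Order.height univX :=
        Order.krullDim_lt_height_of_strictMono
          (IrreducibleCloseds.map_strictMono_of_isInducing hf.isInducing) hmap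
          fun h => hX (top_le_iff.mp (by simpa [h] using hheight))
    _ ≤ topologicalKrullDim X := hheight

theorem Topology.IsEmbedding.topologicalKrullDim_image {X Y : Type*} [TopologicalSpace X]
    [TopologicalSpace Y] {f : Y → X} (hf : IsEmbedding f) (s : Set Y) :
    topologicalKrullDim (f '' s) = topologicalKrullDim s := by
  have hrange : Set.range (f ∘ Subtype.val : s → X) = f '' s := by
    rw [Set.range_comp, Subtype.range_coe]
  let e := (hf.comp IsEmbedding.subtypeVal).toHomeomorph.trans (Homeomorph.setCongr hrange)
  exact (IsHomeomorph.topologicalKrullDim_eq e e.isHomeomorph).symm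

theorem topologicalKrullDim_lt_of_ssubset {X : Type*} [TopologicalSpace X] {s t : Set X}
    (hs : IsClosed s) (ht : IsIrreducible t) (hst : s ⊂ t)
    (hfin : topologicalKrullDim t ≠ ⊤) :
    topologicalKrullDim s < topologicalKrullDim t := by
  have := Subtype.irreducibleSpace ht
  have hclosed : Topology.IsClosedEmbedding (Set.inclusion hst.subset) := by
    refine ⟨Topology.IsEmbedding.inclusion hst.subset, ?_⟩
    rw [Set.range_inclusion]
    exact hs.preimage continuous_subtype_val
  refine hclosed.topologicalKrullDim_lt (fun hsurj => ?_) hfin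
  obtain ⟨w, hwt, hws⟩ := Set.exists_of_ssubset hst
  obtain ⟨z, hz⟩ := hsurj ⟨w, hwt⟩
  have hzw : (z : X) = w := congrArg Subtype.val hz
  exact hws (hzw ▸ z.2)

theorem exists_mem_irreducibleComponents_topologicalKrullDim_gt {X : Type*} [TopologicalSpace X]
    {Y : Set X} (hY : IsClosed Y) {Z : Set Y} (hZ : Z ∈ irreducibleComponents Y)
    (hZX : Subtype.val '' Z ∉ irreducibleComponents X)
    (hfin : ∀ T ∈ irreducibleComponents X, topologicalKrullDim T < ⊤) :
    ∃ T ∈ irreducibleComponents X, T ∉ (Subtype.val '' ·) '' irreducibleComponents Y ∧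
      topologicalKrullDim (Subtype.val '' Z) < topologicalKrullDim T := by
  have hZirr : IsIrreducible (Subtype.val '' Z) :=
    hZ.1.image _ continuous_subtype_val.continuousOn
  obtain ⟨T, hT, hZT⟩ := exists_mem_irreducibleComponents_subset_of_isIrreducible _ hZirr
  refine ⟨T, hT, ?_, ?_⟩
  · rintro ⟨Z', hZ', rfl⟩
    have hZZ' : Z = Z' :=
      hZ.eq_of_le hZ'.1 ((Set.image_subset_image_iff Subtype.val_injective).mp hZT)
    exact hZX (hZZ' ▸ hT)
  · have hZcl : IsClosed (Subtype.val '' Z) :=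
      hY.isClosedEmbedding_subtypeVal.isClosedMap _ (isClosed_of_mem_irreducibleComponents _ hZ)
    exact topologicalKrullDim_lt_of_ssubset hZcl hT.1
      (hZT.ssubset_of_ne fun h => hZX (h ▸ hT)) (hfin T hT).ne

theorem Finset.map_topologicalKrullDim_image_val {X : Type*} [TopologicalSpace X] {Y : Set X}
    [DecidableEq (Set X)] (c : Finset (Set Y)) :
    (c.image (Subtype.val '' ·)).val.map (fun T : Set X => topologicalKrullDim T) =
      c.val.map fun Z : Set Y => topologicalKrullDim Z := by
  rw [image_val_of_injOn (Set.image_injective.mpr Subtype.val_injective).injOn, Multiset.map_map]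
  exact Multiset.map_congr rfl fun Z _ =>
    Topology.IsEmbedding.subtypeVal.topologicalKrullDim_image Z

theorem delta_lt_of_proper_closed_topological_general {X : Type*} [TopologicalSpace X]
    (Y : Set X) (hYclosed : IsClosed Y) (hYproper : Y ≠ Set.univ)
    (hfin : ∀ T ∈ irreducibleComponents X, topologicalKrullDim T < ⊤)
    (cX : Finset (Set X)) (hcX : ↑cX = irreducibleComponents X)
    (cY : Finset (Set Y)) (hcY : ↑cY = irreducibleComponents Y)
    (lX : List (WithBot ℕ∞)) (hlXsorted : lX.Pairwise (· ≥ ·))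
    (hlX : (lX : Multiset (WithBot ℕ∞)) =
      cX.val.map fun T : Set X => topologicalKrullDim T)
    (lY : List (WithBot ℕ∞)) (hlYsorted : lY.Pairwise (· ≥ ·))
    (hlY : (lY : Multiset (WithBot ℕ∞)) =
      cY.val.map fun T : Set Y => topologicalKrullDim T) :
    List.Lex (· < ·) lY lX := by
  classical
  set S : Finset (Set X) := cY.image (Subtype.val '' ·)
  have hmemX : ∀ T, T ∈ cX ↔ T ∈ irreducibleComponents X := by simp [← hcX]
  obtain ⟨x, hx⟩ := (Set.ne_univ_iff_exists_notMem Y).mp hYproper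
  have hxS : irreducibleComponent x ∉ S := fun h => by
    obtain ⟨Z, -, hZ⟩ := Finset.mem_image.mp h
    obtain ⟨z, -, rfl⟩ : x ∈ Subtype.val '' Z := hZ ▸ mem_irreducibleComponent
    exact hx z.2
  have hlt : ∀ s ∈ S \ cX, ∃ t ∈ cX \ S, topologicalKrullDim s < topologicalKrullDim t := by
    intro s hs
    obtain ⟨hsS, hscX⟩ := Finset.mem_sdiff.mp hs
    obtain ⟨Z, hZ, rfl⟩ := Finset.mem_image.mp hsS
    obtain ⟨T, hT, hTS, hZT⟩ := exists_mem_irreducibleComponents_topologicalKrullDim_gt hYclosed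
      (hcY ▸ hZ) (mt (hmemX _).mpr hscX) hfin
    refine ⟨T, Finset.mem_sdiff.mpr ⟨(hmemX T).mpr hT, fun h => hTS ?_⟩, hZT⟩
    rw [← hcY, ← Finset.coe_image]
    exact h
  refine List.lex_lt_of_isDershowitzMannaLT hlYsorted hlXsorted ?_
  rw [hlY, hlX, ← Finset.map_topologicalKrullDim_image_val]
  refine Finset.isDershowitzMannaLT_map_val _ ⟨irreducibleComponent x, ?_⟩ hlt
  exact Finset.mem_sdiff.mpr
    ⟨(hmemX _).mpr (irreducibleComponent_mem_irreducibleComponents x), hxS⟩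

theorem delta_lt_of_proper_closed_topological {X : Type*} [TopologicalSpace X]
    [NoetherianSpace X] [QuasiSober X]
    (Y : Set X) (hYclosed : IsClosed Y) (hYproper : Y ≠ Set.univ)
    (hfin : ∀ T ∈ irreducibleComponents X, topologicalKrullDim T < ⊤)
    (cX : Finset (Set X)) (hcX : ↑cX = irreducibleComponents X)
    (cY : Finset (Set Y)) (hcY : ↑cY = irreducibleComponents Y)
    (lX : List (WithBot ℕ∞)) (hlXsorted : lX.Pairwise (· ≥ ·))
    (hlX : (lX : Multiset (WithBot ℕ∞)) =
      cX.val.map fun T : Set X => topologicalKrullDim T)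
    (lY : List (WithBot ℕ∞)) (hlYsorted : lY.Pairwise (· ≥ ·))
    (hlY : (lY : Multiset (WithBot ℕ∞)) =
      cY.val.map fun T : Set Y => topologicalKrullDim T) :
    List.Lex (· < ·) lY lX :=
  delta_lt_of_proper_closed_topological_general Y hYclosed hYproper hfin cX hcX cY hcY lX hlXsorted
    hlX lY hlYsorted hlY
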